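/- arXiv:1809.04613 — 8 statements merged into one kernel-verified Lean document; each statement's English description precedes it below -/
import Mathlib

section
/- For the stochastic mass action system with species $(A,B,C)$ and reactions $A+B\to 0$, $B\to A+C$, $C\to 2B$, $2B\to C$, every reachable step preserves the quantity $x_1 - x_2 - 2x_3$. If the initial state $x^0$ satisfies $x^0_1 - x^0_2 - 2x^0_3 < 0$, then from every state reachable from $x^0$ one can reach a state at which the reaction $A+B\to 0$ is active; consequently no extinction set for $A+B\to 0$ is reachable from $x^0$. -/
open Finset

/-- A state: copy-numbers of the `d` species. -/
abbrev State (d : ℕ) := Fin d → ℕ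

/-- A reaction: a pair (source complex, product complex). -/
abbrev Rxn (d : ℕ) := (State d) × (State d)

/-- A reaction with source `y` is active at `x` iff `x ≥ y` componentwise. -/
def active {d : ℕ} (y x : State d) : Prop := ∀ i, y i ≤ x i

/-- One-step reachability: from `x` jump to `x + y' - y` whenever `x ≥ y` for a reaction `y → y'`. -/
def step {d : ℕ} (R : List (Rxn d)) (x x' : State d) : Prop :=
  ∃ r ∈ R, active r.1 x ∧ ∀ i, x' i + r.1 i = x i + r.2 i

/-- Reachability: reflexive-transitive closure of one-step reachability. -/
def reach {d : ℕ} (R : List (Rxn d)) : State d → State d → Prop :=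
  Relation.ReflTransGen (step R)

/-- A set is closed if no state outside it is reachable from inside it. -/
def closedSet {d : ℕ} (R : List (Rxn d)) (Γ : Set (State d)) : Prop :=
  ∀ x ∈ Γ, ∀ x', reach R x x' → x' ∈ Γ

/-- An extinction set for a reaction: a closed set on which the reaction is never active. -/
def extinctionSet {d : ℕ} (R : List (Rxn d)) (r : Rxn d) (Γ : Set (State d)) : Prop :=
  closedSet R Γ ∧ ∀ x ∈ Γ, ¬ active r.1 x

/-- No extinction set for `r` is reachable from `x`. -/
def noExtSetReachable {d : ℕ} (R : List (Rxn d)) (r : Rxn d) (x : State d) : Prop :=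
  ∀ Γ : Set (State d), extinctionSet R r Γ → ∀ x' ∈ Γ, ¬ reach R x x'

/-- The network A+B → 0, B → A+C, C → 2B, 2B → C. -/
def N3 : List (Rxn 3) :=
  [(![1,1,0], ![0,0,0]), (![0,1,0], ![1,0,1]), (![0,0,1], ![0,2,0]), (![0,2,0], ![0,0,1])]

/-!
The stoichiometric vectors of `N3` are `(-1,-1,0)`, `(1,-1,1)`, `(0,2,-1)` and `(0,-2,1)`, all
orthogonal to `(1,-1,-2)`, so `x₁ - x₂ - 2x₃` is conserved. If it is negative, every reachable
state has a `B` or a `C`. Firing `C → 2B` if needed produces a `B`, and from any state with a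
`B` the sequence `B → A + C`, `C → 2B` adds one `A` and one `B`, after which `A + B → 0` is
active. A closed set reachable from `x0` therefore contains a state where `A + B → 0` is
active, so it is not an extinction set.
-/

open Relation

section General

variable {d : ℕ} {R : List (Rxn d)}

theorem step_of_mem_of_active {r : Rxn d} (hr : r ∈ R) {x : State d} (hx : active r.1 x) :
    step R x (fun i => x i - r.1 i + r.2 i) :=
  ⟨r, hr, hx, fun i => by dsimp only; have := hx i; omega⟩

theorem sum_mul_eq_of_step {w : Fin d → ℤ}
    (hw : ∀ r ∈ R, ∑ i, w i * (r.1 i : ℤ) = ∑ i, w i * (r.2 i : ℤ)) {x x' : State d}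
    (h : step R x x') : ∑ i, w i * (x' i : ℤ) = ∑ i, w i * (x i : ℤ) := by
  obtain ⟨r, hr, -, hx'⟩ := h
  have hx'_int : ∀ i, (x' i : ℤ) = x i + r.2 i - r.1 i := fun i => by
    have := hx' i; omega
  simp only [hx'_int, mul_sub, mul_add, Finset.sum_sub_distrib, Finset.sum_add_distrib, hw r hr]
  ring

theorem sum_mul_eq_of_reach {w : Fin d → ℤ}
    (hw : ∀ r ∈ R, ∑ i, w i * (r.1 i : ℤ) = ∑ i, w i * (r.2 i : ℤ)) {x x' : State d}
    (h : reach R x x') : ∑ i, w i * (x' i : ℤ) = ∑ i, w i * (x i : ℤ) := by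
  induction h with
  | refl => rfl
  | tail _ hstep ih => rw [sum_mul_eq_of_step hw hstep, ih]

theorem noExtSetReachable_of_forall_reach_active {r : Rxn d} {x0 : State d}
    (h : ∀ x, reach R x0 x → ∃ x'', reach R x x'' ∧ active r.1 x'') :
    noExtSetReachable R r x0 := by
  rintro Γ ⟨hclosed, hinactive⟩ x hxΓ hx
  obtain ⟨x'', hxx'', hactive⟩ := h x hx
  exact hinactive x'' (hclosed x hxΓ x'' hxx'') hactive

end General

theorem N3_conserved :
    ∀ r ∈ N3, ∑ i, ![1, -1, -2] i * (r.1 i : ℤ) = ∑ i, ![1, -1, -2] i * (r.2 i : ℤ) := by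
  simp [N3, Fin.sum_univ_three]

theorem N3_sum_mul_eq (x : State 3) :
    ∑ i, ![1, -1, -2] i * (x i : ℤ) = (x 0 : ℤ) - (x 1 : ℤ) - 2 * (x 2 : ℤ) := by
  simp only [Fin.sum_univ_three, Matrix.cons_val_zero, Matrix.cons_val_one, Matrix.cons_val,
    one_mul, neg_mul]
  ring

theorem reach_N3_of_pos_C {x : State 3} (hC : 0 < x 2) :
    reach N3 x (fun i => x i - ![0, 0, 1] i + ![0, 2, 0] i) :=
  ReflTransGen.single <| step_of_mem_of_active (r := (![0, 0, 1], ![0, 2, 0])) (by simp [N3])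
    fun i => by fin_cases i <;> simp [Nat.one_le_iff_ne_zero, hC.ne']

theorem reach_N3_add_AB {x : State 3} (hB : 0 < x 1) : reach N3 x (x + ![1, 1, 0]) := by
  have hBAC : step N3 x (fun i => x i - ![0, 1, 0] i + ![1, 0, 1] i) :=
    step_of_mem_of_active (r := (![0, 1, 0], ![1, 0, 1])) (by simp [N3])
      fun i => by fin_cases i <;> simp [Nat.one_le_iff_ne_zero, hB.ne']
  have hBAB : reach N3 x _ := ReflTransGen.head hBAC (reach_N3_of_pos_C (by simp))
  convert hBAB using 1
  funext i
  fin_cases i <;> simp; omega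

theorem exists_reach_N3_active_AB {x : State 3} (hBC : 0 < x 1 ∨ 0 < x 2) :
    ∃ x'', reach N3 x x'' ∧ active ![1, 1, 0] x'' := by
  have active_add (x : State 3) : active ![1, 1, 0] (x + ![1, 1, 0]) := fun i => by
    fin_cases i <;> simp
  rcases hBC with hB | hC
  · exact ⟨_, reach_N3_add_AB hB, active_add x⟩
  · exact ⟨_, (reach_N3_of_pos_C hC).trans (reach_N3_add_AB (by simp)), active_add _⟩

/-- Every step preserves `x₁ - x₂ - 2x₃`; if initially this quantity is negative, from every
reachable state one can reach a state where A+B → 0 is active, hence no extinction set for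
A+B → 0 is reachable. -/
theorem no_ext_AB_N3 (x0 : State 3) (h0 : (x0 0 : ℤ) - (x0 1 : ℤ) - 2 * (x0 2 : ℤ) < 0) :
    (∀ x x' : State 3, step N3 x x' →
      (x' 0 : ℤ) - (x' 1 : ℤ) - 2 * (x' 2 : ℤ) = (x 0 : ℤ) - (x 1 : ℤ) - 2 * (x 2 : ℤ)) ∧
    (∀ x, reach N3 x0 x → ∃ x'', reach N3 x x'' ∧ active ![1,1,0] x'') ∧
    noExtSetReachable N3 (![1,1,0], ![0,0,0]) x0 := by
  have reach_active : ∀ x, reach N3 x0 x → ∃ x'', reach N3 x x'' ∧ active ![1,1,0] x'' := by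
    intro x hx
    have hinv := sum_mul_eq_of_reach N3_conserved hx
    rw [N3_sum_mul_eq, N3_sum_mul_eq] at hinv
    exact exists_reach_N3_active_AB (by omega)
  refine ⟨fun x x' h => ?_, reach_active, noExtSetReachable_of_forall_reach_active reach_active⟩
  simpa only [N3_sum_mul_eq] using sum_mul_eq_of_step N3_conserved h
end

section
/- For the deterministic mass action system with species $(A,B,C,D)$ and reactions $A+B\xrightarrow{\kappa_1} B+C$, $B+C\xrightarrow{\kappa_2} 2B$, $2B\xrightarrow{\kappa_3} B+C$, $2B\xrightarrow{\kappa_4} 2D$, $C\xrightarrow{\kappa_5} A$, $D\xrightarrow{\kappa_6} B$: a point $c\in\mathbb{R}_{\geq0}^4$ satisfies $g(c)=0$ if and only if $c_2=c_3=c_4=0$, or $c = (\kappa_3\kappa_5/(\kappa_1\kappa_2),\ s,\ (\kappa_3/\kappa_2)s,\ (2\kappa_4/\kappa_6)s^2)$ for some $s>0$. In particular species $A$ is ACR with value $\kappa_3\kappa_5/(\kappa_1\kappa_2)$. -/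
/-! Adding the first and third equations leaves `c₂ (κ₂ c₃ - κ₃ c₂) = 0`, and the fourth gives
`κ₆ c₄ = 2 κ₄ c₂²`; together with the first these are equivalent to the whole system. If `c₂ = 0`
the first and fourth equations force `c₃ = c₄ = 0`. If `c₂ > 0` we may cancel it: `c₃ = (κ₃/κ₂) c₂`,
and then `κ₁ c₁ c₂ = κ₅ c₃` pins `c₁ = κ₃κ₅/(κ₁κ₂)`, whatever `c₂` is. -/

section Equilibria

variable {κ1 κ2 κ3 κ4 κ5 κ6 a b c d : ℝ}

theorem equilibrium_iff_reduced :
    (-κ1 * a * b + κ5 * c = 0 ∧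
      κ2 * b * c - κ3 * b ^ 2 - 2 * κ4 * b ^ 2 + κ6 * d = 0 ∧
      κ1 * a * b - κ2 * b * c + κ3 * b ^ 2 - κ5 * c = 0 ∧
      2 * κ4 * b ^ 2 - κ6 * d = 0) ↔
    (κ1 * a * b = κ5 * c ∧ b * (κ2 * c - κ3 * b) = 0 ∧ κ6 * d = 2 * κ4 * b ^ 2) := by
  constructor
  · rintro ⟨e1, -, e3, e4⟩
    exact ⟨by linear_combination -e1, by linear_combination -(e1 + e3), by linear_combination -e4⟩
  · rintro ⟨e1, e2, e3⟩
    exact ⟨by linear_combination -e1, by linear_combination e2 + e3, by linear_combination e1 - e2,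
      by linear_combination -e3⟩

theorem reduced_iff_of_eq_zero (h5 : κ5 ≠ 0) (h6 : κ6 ≠ 0) (hb : b = 0) :
    (κ1 * a * b = κ5 * c ∧ b * (κ2 * c - κ3 * b) = 0 ∧ κ6 * d = 2 * κ4 * b ^ 2) ↔
      c = 0 ∧ d = 0 := by
  subst hb
  simp [h5, h6, eq_comm]

theorem reduced_iff_of_ne_zero (h1 : κ1 ≠ 0) (h2 : κ2 ≠ 0) (h6 : κ6 ≠ 0) (hb : b ≠ 0) :
    (κ1 * a * b = κ5 * c ∧ b * (κ2 * c - κ3 * b) = 0 ∧ κ6 * d = 2 * κ4 * b ^ 2) ↔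
      a = κ3 * κ5 / (κ1 * κ2) ∧ c = κ3 / κ2 * b ∧ d = 2 * κ4 / κ6 * b ^ 2 := by
  have hc : b * (κ2 * c - κ3 * b) = 0 ↔ c = κ3 / κ2 * b := by
    rw [mul_eq_zero, or_iff_right hb, sub_eq_zero, div_mul_eq_mul_div, eq_div_iff h2, mul_comm c]
  have hd : κ6 * d = 2 * κ4 * b ^ 2 ↔ d = 2 * κ4 / κ6 * b ^ 2 := by
    rw [div_mul_eq_mul_div, eq_div_iff h6, mul_comm d]
  rw [hc, hd]
  constructor
  · rintro ⟨ha, rfl, rfl⟩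
    refine ⟨?_, rfl, rfl⟩
    field_simp at ha ⊢
    linear_combination ha
  · rintro ⟨rfl, rfl, rfl⟩
    refine ⟨?_, rfl, rfl⟩
    field_simp

end Equilibria

theorem exists_pos_eq_vecCons_iff (c : Fin 4 → ℝ) (p q r : ℝ) :
    (∃ s : ℝ, 0 < s ∧ c = ![p, s, q * s, r * s ^ 2]) ↔
      0 < c 1 ∧ c 0 = p ∧ c 2 = q * c 1 ∧ c 3 = r * c 1 ^ 2 := by
  constructor
  · rintro ⟨s, hs, rfl⟩
    simp [hs]
  · rintro ⟨hs, h0, h2, h3⟩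
    refine ⟨c 1, hs, ?_⟩
    ext i
    fin_cases i <;> simp [h0, h2, h3]

theorem acr_example2_general (κ1 κ2 κ3 κ4 κ5 κ6 : ℝ)
    (h1 : 0 < κ1) (h2 : 0 < κ2) (h5 : 0 < κ5) (h6 : 0 < κ6)
    (c : Fin 4 → ℝ) (hc : ∀ i, 0 ≤ c i) :
    (-κ1 * c 0 * c 1 + κ5 * c 2 = 0 ∧
     κ2 * c 1 * c 2 - κ3 * (c 1)^2 - 2 * κ4 * (c 1)^2 + κ6 * c 3 = 0 ∧
     κ1 * c 0 * c 1 - κ2 * c 1 * c 2 + κ3 * (c 1)^2 - κ5 * c 2 = 0 ∧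
     2 * κ4 * (c 1)^2 - κ6 * c 3 = 0) ↔
    ((c 1 = 0 ∧ c 2 = 0 ∧ c 3 = 0) ∨
      ∃ s : ℝ, 0 < s ∧
        c = ![κ3 * κ5 / (κ1 * κ2), s, (κ3 / κ2) * s, (2 * κ4 / κ6) * s^2]) := by
  rw [equilibrium_iff_reduced, exists_pos_eq_vecCons_iff]
  rcases (hc 1).eq_or_lt with hb | hb
  · rw [reduced_iff_of_eq_zero h5.ne' h6.ne' hb.symm, ← hb]
    simp
  · rw [reduced_iff_of_ne_zero h1.ne' h2.ne' h6.ne' hb.ne']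
    simp [hb, hb.ne']

/-- Equilibria of the system A+B →(κ1) B+C, B+C →(κ2) 2B, 2B →(κ3) B+C, 2B →(κ4) 2D,
C →(κ5) A, D →(κ6) B: a nonnegative point is an equilibrium iff `c₂ = c₃ = c₄ = 0` or it lies
on the curve `(κ3κ5/(κ1κ2), s, (κ3/κ2)s, (2κ4/κ6)s²)`, `s > 0`. In particular A is ACR with
value κ3κ5/(κ1κ2). -/
theorem acr_example2 (κ1 κ2 κ3 κ4 κ5 κ6 : ℝ)
    (h1 : 0 < κ1) (h2 : 0 < κ2) (h3 : 0 < κ3) (h4 : 0 < κ4) (h5 : 0 < κ5) (h6 : 0 < κ6)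
    (c : Fin 4 → ℝ) (hc : ∀ i, 0 ≤ c i) :
    (-κ1 * c 0 * c 1 + κ5 * c 2 = 0 ∧
     κ2 * c 1 * c 2 - κ3 * (c 1)^2 - 2 * κ4 * (c 1)^2 + κ6 * c 3 = 0 ∧
     κ1 * c 0 * c 1 - κ2 * c 1 * c 2 + κ3 * (c 1)^2 - κ5 * c 2 = 0 ∧
     2 * κ4 * (c 1)^2 - κ6 * c 3 = 0) ↔
    ((c 1 = 0 ∧ c 2 = 0 ∧ c 3 = 0) ∨
      ∃ s : ℝ, 0 < s ∧
        c = ![κ3 * κ5 / (κ1 * κ2), s, (κ3 / κ2) * s, (2 * κ4 / κ6) * s^2]) :=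
  acr_example2_general κ1 κ2 κ3 κ4 κ5 κ6 h1 h2 h5 h6 c hc
end

section
/- For the stochastic mass action system with species $(A,B,C,D)$ and reactions $A+B\to B+C$, $B+C\to 2B$, $2B\to B+C$, $2B\to 2D$, $C\to A$, $D\to B$: every reachable step preserves $x_1+x_2+x_3+x_4$ and never decreases $x_2+x_4$ below 1 once it is at least 1 (the only reaction decreasing $x_2+x_4$ is $2B\to B+C$, which requires $x_2\geq 2$). If $X_1(0)+X_2(0)+X_3(0)+X_4(0)\geq 2$ and $X_2(0)+X_4(0)\geq 1$, then no extinction set for $A+B\to B+C$ is reachable from $X(0)$. -/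
open Finset

/-- The network A+B → B+C, B+C → 2B, 2B → B+C, 2B → 2D, C → A, D → B. -/
def N4 : List (Rxn 4) :=
  [(![1,1,0,0], ![0,1,1,0]), (![0,1,1,0], ![0,2,0,0]), (![0,2,0,0], ![0,1,1,0]),
   (![0,2,0,0], ![0,0,0,2]), (![0,0,1,0], ![1,0,0,0]), (![0,0,0,1], ![0,1,0,0])]

/-!
Total mass and the number of molecules of `B` or `D` are invariants (the latter stays positive:
the only reaction lowering it, `2B → B + C`, leaves a `B` behind). From a state with mass at
least 2 and a `B` or `D`, turning every `D` into `B` yields a `B`; besides it there is an `A`,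
a `C` (then `C → A`) or a second `B` (then `2B → B + C`, `C → A`). So `A + B → B + C` can be
re-enabled from every reachable state, which rules out a reachable extinction set.
-/

section Reachability

variable {d : ℕ} {R : List (Rxn d)}

theorem reach_invariant {P : State d → Prop} (hP : ∀ x x', step R x x' → P x → P x')
    {x x' : State d} (h : reach R x x') (hx : P x) : P x' := by
  induction h with
  | refl => exact hx
  | tail _ hs ih => exact hP _ _ hs ih

theorem noExtSetReachable_of_reach_active {r : Rxn d} {x : State d}
    (h : ∀ x', reach R x x' → ∃ x'', reach R x' x'' ∧ active r.1 x'') :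
    noExtSetReachable R r x := by
  rintro Γ ⟨hclosed, hinactive⟩ x' hx' hreach
  obtain ⟨x'', hreach', hactive⟩ := h x' hreach
  exact hinactive x'' (hclosed x' hx' x'' hreach') hactive

theorem exists_weightedSum_of_step (w : State d) {x x' : State d} (h : step R x x') :
    ∃ r ∈ R, ∑ i, w i * r.1 i ≤ ∑ i, w i * x i ∧
      ∑ i, w i * x' i + ∑ i, w i * r.1 i = ∑ i, w i * x i + ∑ i, w i * r.2 i := by
  obtain ⟨r, hr, hactive, hx'⟩ := h
  refine ⟨r, hr, sum_le_sum fun i _ => Nat.mul_le_mul_left _ (hactive i), ?_⟩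
  simp only [← sum_add_distrib, ← mul_add, hx']

theorem weightedSum_step_eq (w : State d)
    (hR : ∀ r ∈ R, ∑ i, w i * r.1 i = ∑ i, w i * r.2 i) {x x' : State d} (h : step R x x') :
    ∑ i, w i * x' i = ∑ i, w i * x i := by
  obtain ⟨r, hr, -, hsum⟩ := exists_weightedSum_of_step w h
  have := hR r hr
  omega

theorem one_le_weightedSum_step (w : State d)
    (hR : ∀ r ∈ R, ∑ i, w i * r.1 i ≤ ∑ i, w i * r.2 i ∨ 1 ≤ ∑ i, w i * r.2 i)
    {x x' : State d} (h : step R x x') (hx : 1 ≤ ∑ i, w i * x i) :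
    1 ≤ ∑ i, w i * x' i := by
  obtain ⟨r, hr, hle, hsum⟩ := exists_weightedSum_of_step w h
  rcases hR r hr with h | h <;> omega

end Reachability

section N4

theorem step_N4_mass {x x' : State 4} (h : step N4 x x') :
    x' 0 + x' 1 + x' 2 + x' 3 = x 0 + x 1 + x 2 + x 3 := by
  simpa [Fin.sum_univ_four] using
    weightedSum_step_eq 1 (by simp [N4, Fin.sum_univ_four]) h

theorem step_N4_one_le_B_add_D {x x' : State 4} (h : step N4 x x') (hx : 1 ≤ x 1 + x 3) :
    1 ≤ x' 1 + x' 3 := by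
  simpa [Fin.sum_univ_four] using
    one_le_weightedSum_step ![0, 1, 0, 1] (by simp [N4, Fin.sum_univ_four]) h
      (by simpa [Fin.sum_univ_four] using hx)

theorem active_vec_four {p q r s a b c e : ℕ} :
    active ![p, q, r, s] ![a, b, c, e] ↔ p ≤ a ∧ q ≤ b ∧ r ≤ c ∧ s ≤ e := by
  simp [active, Fin.forall_fin_succ]

theorem step_D_to_B (a b c e : ℕ) : step N4 ![a, b, c, e + 1] ![a, b + 1, c, e] :=
  ⟨(![0, 0, 0, 1], ![0, 1, 0, 0]), by simp [N4], by simp [active_vec_four],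
    by simp [Fin.forall_fin_succ]⟩

theorem step_C_to_A (a b c e : ℕ) : step N4 ![a, b, c + 1, e] ![a + 1, b, c, e] :=
  ⟨(![0, 0, 1, 0], ![1, 0, 0, 0]), by simp [N4], by simp [active_vec_four],
    by simp [Fin.forall_fin_succ]⟩

theorem step_2B_to_BC (a b c e : ℕ) : step N4 ![a, b + 2, c, e] ![a, b + 1, c + 1, e] :=
  ⟨(![0, 2, 0, 0], ![0, 1, 1, 0]), by simp [N4], by simp [active_vec_four],
    by simp [Fin.forall_fin_succ]⟩

theorem reach_D_to_B (a b c e : ℕ) : reach N4 ![a, b, c, e] ![a, b + e, c, 0] := by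
  induction e generalizing b with
  | zero => exact .refl
  | succ e ih =>
    have h := ih (b + 1)
    rw [add_right_comm, add_assoc] at h
    exact .head (step_D_to_B a b c e) h

theorem exists_reach_active_of_D_eq_zero {a b c : ℕ} (hm : 2 ≤ a + b + c) (hb : 1 ≤ b) :
    ∃ x', reach N4 ![a, b, c, 0] x' ∧ active ![1, 1, 0, 0] x' := by
  obtain ⟨b, rfl⟩ := Nat.exists_eq_add_of_le' hb
  rcases a with _ | a
  · rcases c with _ | c
    · obtain ⟨b, rfl⟩ := Nat.exists_eq_add_of_le' (show 1 ≤ b by omega)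
      exact ⟨_, .head (step_2B_to_BC 0 b 0 0) (.single (step_C_to_A 0 (b + 1) 0 0)),
        by simp [active_vec_four]⟩
    · exact ⟨_, .single (step_C_to_A 0 (b + 1) c 0), by simp [active_vec_four]⟩
  · exact ⟨_, .refl, by simp [active_vec_four]⟩

theorem exists_reach_active_N4 {a b c e : ℕ} (hm : 2 ≤ a + b + c + e) (hb : 1 ≤ b + e) :
    ∃ x', reach N4 ![a, b, c, e] x' ∧ active ![1, 1, 0, 0] x' := by
  obtain ⟨x', hreach, hactive⟩ := exists_reach_active_of_D_eq_zero (a := a) (c := c) (by omega) hb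
  exact ⟨x', (reach_D_to_B a b c e).trans hreach, hactive⟩

end N4

/-- Every step preserves the total mass and preserves `x₂ + x₄ ≥ 1`; if the total mass is at
least 2 and `x₂ + x₄ ≥ 1` initially, then no extinction set for A+B → B+C is reachable. -/
theorem no_ext_AB_N4 (x0 : State 4)
    (hm : 2 ≤ x0 0 + x0 1 + x0 2 + x0 3) (hb : 1 ≤ x0 1 + x0 3) :
    (∀ x x' : State 4, step N4 x x' →
      x' 0 + x' 1 + x' 2 + x' 3 = x 0 + x 1 + x 2 + x 3) ∧
    (∀ x x' : State 4, step N4 x x' → 1 ≤ x 1 + x 3 → 1 ≤ x' 1 + x' 3) ∧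
    noExtSetReachable N4 (![1,1,0,0], ![0,1,1,0]) x0 := by
  refine ⟨fun _ _ => step_N4_mass, fun _ _ => step_N4_one_le_B_add_D, ?_⟩
  refine noExtSetReachable_of_reach_active fun x hreach => ?_
  obtain ⟨hm', hb'⟩ : 2 ≤ x 0 + x 1 + x 2 + x 3 ∧ 1 ≤ x 1 + x 3 :=
    reach_invariant (P := fun x => 2 ≤ x 0 + x 1 + x 2 + x 3 ∧ 1 ≤ x 1 + x 3)
      (fun _ _ hs hP => ⟨step_N4_mass hs ▸ hP.1, step_N4_one_le_B_add_D hs hP.2⟩) hreach ⟨hm, hb⟩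
  have hx : x = ![x 0, x 1, x 2, x 3] := by
    ext i; fin_cases i <;> rfl
  rw [hx]
  exact exists_reach_active_N4 hm' hb'
end

section
/- For the stochastic mass action system with species $(A,B,C,D)$ and reactions $A+B\to B+C$, $B+C\to 2B$, $2B\to B+C$, $2B\to 2D$, $C\to A$, $D\to B$, with initial state satisfying $\|X(0)\|_1 \geq 2$ and $X_2(0)+X_4(0)\geq 1$: no extinction set for any of the six reactions is reachable from $X(0)$. -/
open Finset

/-! Total mass is conserved and `B + D ≥ 1` is invariant, and from every such state `A + B → B + C`
can be made active: turn all `D` into `B`; if there is no `A`, make one by `C → A`, preceded by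
`2B → B + C` when there is no `C` either. The product of `A + B → B + C` covers the sources of
`B + C → 2B` and `C → A`, the product `2B` of the former covers `2B → B + C` and `2B → 2D`, and
`2D` covers `D → B`; so each reaction can be made active again from any reachable state, which a
closed set on which it is inactive forbids. -/

section Reachability

variable {d : ℕ} {R : List (Rxn d)}

theorem step_of_mem {r : Rxn d} (hr : r ∈ R) {x : State d} (hx : active r.1 x) :
    step R x (x + r.2 - r.1) :=
  ⟨r, hr, hx, fun i => by have := hx i; simp only [Pi.add_apply, Pi.sub_apply]; omega⟩

theorem sum_eq_of_reach (hR : ∀ r ∈ R, ∑ i, r.1 i = ∑ i, r.2 i) {x x' : State d}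
    (h : reach R x x') : ∑ i, x' i = ∑ i, x i := by
  refine reach_invariant (P := fun y => ∑ i, y i = ∑ i, x i) ?_ h rfl
  rintro y y' ⟨r, hr, -, hy'⟩ hy
  have := congrArg (fun f : State d => ∑ i, f i) (funext hy')
  simp only [Finset.sum_add_distrib, hR r hr] at this
  omega

def alwaysActivatable (R : List (Rxn d)) (r : Rxn d) (x : State d) : Prop :=
  ∀ x', reach R x x' → ∃ z, reach R x' z ∧ active r.1 z

theorem noExtSetReachable_of_alwaysActivatable {r : Rxn d} {x : State d}
    (h : alwaysActivatable R r x) : noExtSetReachable R r x := by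
  rintro Γ ⟨hclosed, hinactive⟩ x' hx' hreach
  obtain ⟨z, hz, hact⟩ := h x' hreach
  exact hinactive z (hclosed x' hx' z hz) hact

theorem alwaysActivatable.of_source_le_product {r r' : Rxn d} {x : State d}
    (h : alwaysActivatable R r x) (hr : r ∈ R) (hle : r'.1 ≤ r.2) :
    alwaysActivatable R r' x := by
  intro x' hx'
  obtain ⟨z, hz, hact⟩ := h x' hx'
  refine ⟨z + r.2 - r.1, hz.tail (step_of_mem hr hact), fun i => ?_⟩
  have h1 : r.1 i ≤ z i := hact i
  have h2 : r'.1 i ≤ r.2 i := hle i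
  simp only [Pi.add_apply, Pi.sub_apply]
  omega

end Reachability

namespace N4

theorem mass_conserved : ∀ r ∈ N4, ∑ i, r.1 i = ∑ i, r.2 i := by
  simp [N4, Fin.sum_univ_four]

theorem one_le_B_add_D_of_reach {x x' : State 4} (h : reach N4 x x') (hx : 1 ≤ x 1 + x 3) :
    1 ≤ x' 1 + x' 3 := by
  refine reach_invariant (P := fun y => 1 ≤ y 1 + y 3) (fun y y' hy => ?_) h hx
  obtain ⟨r, hr, hact, hy'⟩ := hy
  have h1 := hy' 1; have h3 := hy' 3; have a1 := hact 1
  simp only [N4, List.mem_cons, List.not_mem_nil, or_false] at hr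
  rcases hr with rfl | rfl | rfl | rfl | rfl | rfl <;> simp only [Matrix.cons_val] at h1 h3 a1 <;> omega

theorem reach_D_to_B (a b c d : ℕ) : reach N4 ![a, b, c, d] ![a, b + d, c, 0] := by
  induction d generalizing b with
  | zero => exact Relation.ReflTransGen.refl
  | succ d ih =>
    have hs : step N4 ![a, b, c, d + 1] ![a, b + 1, c, d] :=
      ⟨(![0,0,0,1], ![0,1,0,0]), by simp [N4], fun i => by fin_cases i <;> simp,
        fun i => by fin_cases i <;> simp⟩
    refine Relation.ReflTransGen.head hs ?_
    rw [show b + (d + 1) = b + 1 + d by omega]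
    exact ih (b + 1)

theorem step_C_to_A (a b c d : ℕ) : step N4 ![a, b, c + 1, d] ![a + 1, b, c, d] :=
  ⟨(![0,0,1,0], ![1,0,0,0]), by simp [N4], fun i => by fin_cases i <;> simp,
    fun i => by fin_cases i <;> simp⟩

theorem step_BB_to_BC (a b c d : ℕ) : step N4 ![a, b + 2, c, d] ![a, b + 1, c + 1, d] :=
  ⟨(![0,2,0,0], ![0,1,1,0]), by simp [N4], fun i => by fin_cases i <;> simp,
    fun i => by fin_cases i <;> simp⟩

theorem active_AB_iff (a b c d : ℕ) : active ![1, 1, 0, 0] ![a, b, c, d] ↔ 1 ≤ a ∧ 1 ≤ b := by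
  simp [active, Fin.forall_fin_succ]

theorem exists_reach_active_AB_of_D_eq_zero {a b c : ℕ} (hm : 2 ≤ a + b + c) (hb : 1 ≤ b) :
    ∃ z, reach N4 ![a, b, c, 0] z ∧ active ![1, 1, 0, 0] z := by
  rcases a with _ | a
  · rcases c with _ | c
    · obtain ⟨m, rfl⟩ : ∃ m, b = m + 2 := ⟨b - 2, by omega⟩
      refine ⟨![1, m + 1, 0, 0], ?_, (active_AB_iff ..).2 (by omega)⟩
      exact .head (step_BB_to_BC 0 m 0 0) (.single (step_C_to_A 0 (m + 1) 0 0))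
    · exact ⟨_, .single (step_C_to_A 0 b c 0), (active_AB_iff ..).2 (by omega)⟩
  · exact ⟨_, .refl, (active_AB_iff ..).2 (by omega)⟩

theorem alwaysActivatable_AB {x0 : State 4} (hm : 2 ≤ ∑ i, x0 i) (hb : 1 ≤ x0 1 + x0 3) :
    alwaysActivatable N4 (![1, 1, 0, 0], ![0, 1, 1, 0]) x0 := by
  intro x hx
  have hm' : 2 ≤ x 0 + x 1 + x 2 + x 3 := by
    rwa [← Fin.sum_univ_four, sum_eq_of_reach mass_conserved hx]
  have hb' := one_le_B_add_D_of_reach hx hb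
  have hD : reach N4 x ![x 0, x 1 + x 3, x 2, 0] := by
    nth_rewrite 1 [← FinVec.etaExpand_eq x]
    exact reach_D_to_B _ _ _ _
  obtain ⟨z, hz, hact⟩ := exists_reach_active_AB_of_D_eq_zero (a := x 0) (c := x 2) (by omega) hb'
  exact ⟨z, hD.trans hz, hact⟩

end N4

/-- If `‖X(0)‖₁ ≥ 2` and `X₂(0) + X₄(0) ≥ 1`, then no extinction set for any of the six
reactions is reachable from `X(0)`. -/
theorem no_extinction_N4 (x0 : State 4)
    (hm : 2 ≤ ∑ i, x0 i) (hb : 1 ≤ x0 1 + x0 3) :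
    ∀ r ∈ N4, noExtSetReachable N4 r x0 := by
  have hAB := N4.alwaysActivatable_AB hm hb
  have hBC : alwaysActivatable N4 (![0,1,1,0], ![0,2,0,0]) x0 :=
    hAB.of_source_le_product (by simp [N4]) (by rw [Pi.le_def]; decide)
  have hC : alwaysActivatable N4 (![0,0,1,0], ![1,0,0,0]) x0 :=
    hAB.of_source_le_product (by simp [N4]) (by rw [Pi.le_def]; decide)
  have hBB : alwaysActivatable N4 (![0,2,0,0], ![0,1,1,0]) x0 :=
    hBC.of_source_le_product (by simp [N4]) (by rw [Pi.le_def]; decide)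
  have hBD : alwaysActivatable N4 (![0,2,0,0], ![0,0,0,2]) x0 :=
    hBC.of_source_le_product (by simp [N4]) (by rw [Pi.le_def]; decide)
  have hD : alwaysActivatable N4 (![0,0,0,1], ![0,1,0,0]) x0 :=
    hBD.of_source_le_product (by simp [N4]) (by rw [Pi.le_def]; decide)
  intro r hr
  simp only [N4, List.mem_cons, List.not_mem_nil, or_false] at hr
  rcases hr with rfl | rfl | rfl | rfl | rfl | rfl <;>
    exact noExtSetReachable_of_alwaysActivatable ‹_›
end

section
/- For the deterministic mass action system with species $(A,B,C)$ and reactions $A+B\xrightarrow{\kappa_1} B+C$, $B+C\xrightarrow{\kappa_2} 2B$, $2B\xrightarrow{\kappa_3} B+C$, $C\xrightarrow{\kappa_4} A$: a point $c\in\mathbb{R}_{\geq0}^3$ satisfies $g(c)=0$ if and only if $c_2=c_3=0$, or $c = (\kappa_3\kappa_4/(\kappa_1\kappa_2),\ s,\ (\kappa_3/\kappa_2)s)$ for some $s>0$. In particular species $A$ is ACR with value $\kappa_3\kappa_4/(\kappa_1\kappa_2)$. -/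
/-!
The third component of `g` is minus the sum of the first two (the total concentration
`c₁ + c₂ + c₃` is conserved), so only the first two equations matter. The
second factors as `c₂ (κ₂ c₃ - κ₃ c₂) = 0`. If `c₂ = 0`, the first forces `c₃ = 0`. Otherwise
`c₃ = (κ₃/κ₂) c₂`, and the first becomes `c₂ (κ₃κ₄/κ₂ - κ₁ c₁) = 0`, which pins `c₁`.
-/

section SteadyState

variable {κ1 κ2 κ3 κ4 a b c : ℝ}

theorem steady_state_iff_first_two :
    (-κ1 * a * b + κ4 * c = 0 ∧ κ2 * b * c - κ3 * b ^ 2 = 0 ∧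
      κ1 * a * b - κ2 * b * c + κ3 * b ^ 2 - κ4 * c = 0) ↔
    (-κ1 * a * b + κ4 * c = 0 ∧ κ2 * b * c - κ3 * b ^ 2 = 0) :=
  ⟨fun ⟨e1, e2, _⟩ ↦ ⟨e1, e2⟩, fun ⟨e1, e2⟩ ↦ ⟨e1, e2, by linear_combination -e1 - e2⟩⟩

theorem steady_state_iff_of_ne_zero (h1 : κ1 ≠ 0) (h2 : κ2 ≠ 0) (hb : b ≠ 0) :
    (-κ1 * a * b + κ4 * c = 0 ∧ κ2 * b * c - κ3 * b ^ 2 = 0) ↔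
      a = κ3 * κ4 / (κ1 * κ2) ∧ c = κ3 / κ2 * b := by
  have hsecond : κ2 * b * c - κ3 * b ^ 2 = b * κ2 * (c - κ3 / κ2 * b) := by
    field_simp
  have hfirst : -κ1 * a * b + κ4 * (κ3 / κ2 * b) = -(b * κ1) * (a - κ3 * κ4 / (κ1 * κ2)) := by
    field_simp
    ring
  rw [and_comm, and_comm (a := a = _), hsecond]
  simp only [mul_eq_zero, sub_eq_zero, hb, h2, false_or]
  refine and_congr_right fun hc ↦ ?_
  simp only [hc, hfirst, mul_eq_zero, neg_eq_zero, sub_eq_zero, hb, h1, false_or]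

end SteadyState

theorem acr_example3_general (κ1 κ2 κ3 κ4 : ℝ)
    (h1 : 0 < κ1) (h2 : 0 < κ2) (h4 : 0 < κ4)
    (c : Fin 3 → ℝ) (hc : ∀ i, 0 ≤ c i) :
    (-κ1 * c 0 * c 1 + κ4 * c 2 = 0 ∧
     κ2 * c 1 * c 2 - κ3 * (c 1)^2 = 0 ∧
     κ1 * c 0 * c 1 - κ2 * c 1 * c 2 + κ3 * (c 1)^2 - κ4 * c 2 = 0) ↔
    ((c 1 = 0 ∧ c 2 = 0) ∨
      ∃ s : ℝ, 0 < s ∧ c = ![κ3 * κ4 / (κ1 * κ2), s, (κ3 / κ2) * s]) := by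
  simp only [steady_state_iff_first_two, funext_iff, Fin.forall_fin_succ]
  rcases (hc 1).eq_or_lt with hb | hb
  · simp [← hb, h4.ne']
  · rw [steady_state_iff_of_ne_zero h1.ne' h2.ne' hb.ne']
    simp [hb, hb.ne']

/-- Equilibria of the system A+B →(κ1) B+C, B+C →(κ2) 2B, 2B →(κ3) B+C, C →(κ4) A:
a nonnegative point is an equilibrium iff `c₂ = c₃ = 0` or it equals
`(κ3κ4/(κ1κ2), s, (κ3/κ2)s)` for some `s > 0`. In particular A is ACR with
value κ3κ4/(κ1κ2). -/
theorem acr_example3 (κ1 κ2 κ3 κ4 : ℝ)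
    (h1 : 0 < κ1) (h2 : 0 < κ2) (h3 : 0 < κ3) (h4 : 0 < κ4)
    (c : Fin 3 → ℝ) (hc : ∀ i, 0 ≤ c i) :
    (-κ1 * c 0 * c 1 + κ4 * c 2 = 0 ∧
     κ2 * c 1 * c 2 - κ3 * (c 1)^2 = 0 ∧
     κ1 * c 0 * c 1 - κ2 * c 1 * c 2 + κ3 * (c 1)^2 - κ4 * c 2 = 0) ↔
    ((c 1 = 0 ∧ c 2 = 0) ∨
      ∃ s : ℝ, 0 < s ∧ c = ![κ3 * κ4 / (κ1 * κ2), s, (κ3 / κ2) * s]) :=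
  acr_example3_general κ1 κ2 κ3 κ4 h1 h2 h4 c hc
end

section
/- For the deterministic mass action system with species $(A,B,C,D,E)$ and reactions $A+B\xrightarrow{\kappa_1} B+C$, $B+C\xrightarrow{\kappa_2} 2B$, $2B\xrightarrow{\kappa_3} B+C$, $C\xrightarrow{\kappa_4} A$, $E\xrightarrow{\kappa_5} A$, $A+D\xrightarrow{\kappa_6} D+E$, $D+E\xrightarrow{\kappa_7} 2D$, $2D\xrightarrow{\kappa_8} D+E$: there exists $c\in\mathbb{R}_{>0}^5$ with $g(c)=0$ if and only if $\kappa_3\kappa_4/(\kappa_1\kappa_2) = \kappa_5\kappa_8/(\kappa_6\kappa_7)$. In particular, for rate constants not satisfying this equality the system has no positive equilibrium. -/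
/-!
The network splits into two copies of one module `A + B → B + C`, `B + C → 2B`, `2B → B + C`,
`C → A`, coupled only through `A`. At a steady state of the private species `B, C` of a module
with rates `k₁, k₂, k₃, k₄` and `B ≠ 0`, one has `k₂ C = k₃ B` and then `k₁ A B = k₄ C`, so
`A = k₃ k₄ / (k₁ k₂)` regardless of everything else. The two modules force the same
concentration of `A`, which is the condition; conversely, when the two values agree, the
modules' steady states glue, and the equation for `A` is the negative of the sum of the other
four (total mass is conserved).
-/

section ReactionModule

variable {K : Type*} [Field K] {k₁ k₂ k₃ k₄ a b c : K}

theorem autocatalytic_module_steady_iff (hk₁ : k₁ ≠ 0) (hk₂ : k₂ ≠ 0) (hb : b ≠ 0) :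
    (k₂ * b * c - k₃ * b ^ 2 = 0 ∧ k₁ * a * b - k₂ * b * c + k₃ * b ^ 2 - k₄ * c = 0) ↔
      c = k₃ * b / k₂ ∧ a = k₃ * k₄ / (k₁ * k₂) := by
  constructor
  · rintro ⟨hB, hC⟩
    have hc : k₂ * c = k₃ * b := mul_left_cancel₀ hb (by linear_combination hB)
    have ha : k₁ * k₂ * a = k₃ * k₄ :=
      mul_left_cancel₀ hb (by linear_combination k₂ * hC + (k₂ * b + k₄) * hc)
    exact ⟨by rw [eq_div_iff hk₂]; linear_combination hc,
      by rw [eq_div_iff (mul_ne_zero hk₁ hk₂)]; linear_combination ha⟩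
  · rintro ⟨rfl, rfl⟩
    constructor <;> field_simp <;> ring

end ReactionModule

theorem pos_equilibrium_iff_general (κ1 κ2 κ3 κ4 κ5 κ6 κ7 κ8 : ℝ)
    (h1 : 0 < κ1) (h2 : 0 < κ2) (h3 : 0 < κ3) (h4 : 0 < κ4)
    (h6 : 0 < κ6) (h7 : 0 < κ7) (h8 : 0 < κ8) :
    (∃ c : Fin 5 → ℝ, (∀ i, 0 < c i) ∧
      -κ1 * c 0 * c 1 + κ4 * c 2 + κ5 * c 4 - κ6 * c 0 * c 3 = 0 ∧
      κ2 * c 1 * c 2 - κ3 * (c 1)^2 = 0 ∧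
      κ1 * c 0 * c 1 - κ2 * c 1 * c 2 + κ3 * (c 1)^2 - κ4 * c 2 = 0 ∧
      κ7 * c 3 * c 4 - κ8 * (c 3)^2 = 0 ∧
      -κ5 * c 4 + κ6 * c 0 * c 3 - κ7 * c 3 * c 4 + κ8 * (c 3)^2 = 0) ↔
    κ3 * κ4 / (κ1 * κ2) = κ5 * κ8 / (κ6 * κ7) := by
  constructor
  · rintro ⟨c, hc, -, hB, hC, hD, hE⟩
    obtain ⟨-, hA₁⟩ := (autocatalytic_module_steady_iff h1.ne' h2.ne' (hc 1).ne').1 ⟨hB, hC⟩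
    obtain ⟨-, hA₂⟩ := (autocatalytic_module_steady_iff (a := c 0) (k₄ := κ5)
      h6.ne' h7.ne' (hc 3).ne').1 ⟨hD, by linear_combination hE⟩
    rw [← hA₁, hA₂, mul_comm κ8]
  · intro h
    obtain ⟨hB, hC⟩ := (autocatalytic_module_steady_iff (a := κ3 * κ4 / (κ1 * κ2))
      (c := κ3 * 1 / κ2) (k₄ := κ4) h1.ne' h2.ne' one_ne_zero).2 ⟨rfl, rfl⟩
    obtain ⟨hD, hE⟩ := (autocatalytic_module_steady_iff (a := κ3 * κ4 / (κ1 * κ2))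
      (c := κ8 * 1 / κ7) (k₄ := κ5) h6.ne' h7.ne' one_ne_zero).2 ⟨rfl, by rw [h, mul_comm κ5]⟩
    refine ⟨![κ3 * κ4 / (κ1 * κ2), 1, κ3 * 1 / κ2, 1, κ8 * 1 / κ7], ?_, ?_, hB, hC, hD, ?_⟩
    · intro i
      fin_cases i <;> simp only [Fin.reduceFinMk, Matrix.cons_val] <;> positivity
    all_goals simp only [Matrix.cons_val]
    · linear_combination -(hB + hC + hD + hE)
    · linear_combination hE

/-- For the system A+B →(κ1) B+C, B+C →(κ2) 2B, 2B →(κ3) B+C, C →(κ4) A, E →(κ5) A,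
A+D →(κ6) D+E, D+E →(κ7) 2D, 2D →(κ8) D+E: a positive equilibrium exists iff
`κ3κ4/(κ1κ2) = κ5κ8/(κ6κ7)`. -/
theorem pos_equilibrium_iff (κ1 κ2 κ3 κ4 κ5 κ6 κ7 κ8 : ℝ)
    (h1 : 0 < κ1) (h2 : 0 < κ2) (h3 : 0 < κ3) (h4 : 0 < κ4)
    (h5 : 0 < κ5) (h6 : 0 < κ6) (h7 : 0 < κ7) (h8 : 0 < κ8) :
    (∃ c : Fin 5 → ℝ, (∀ i, 0 < c i) ∧
      -κ1 * c 0 * c 1 + κ4 * c 2 + κ5 * c 4 - κ6 * c 0 * c 3 = 0 ∧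
      κ2 * c 1 * c 2 - κ3 * (c 1)^2 = 0 ∧
      κ1 * c 0 * c 1 - κ2 * c 1 * c 2 + κ3 * (c 1)^2 - κ4 * c 2 = 0 ∧
      κ7 * c 3 * c 4 - κ8 * (c 3)^2 = 0 ∧
      -κ5 * c 4 + κ6 * c 0 * c 3 - κ7 * c 3 * c 4 + κ8 * (c 3)^2 = 0) ↔
    κ3 * κ4 / (κ1 * κ2) = κ5 * κ8 / (κ6 * κ7) :=
  pos_equilibrium_iff_general κ1 κ2 κ3 κ4 κ5 κ6 κ7 κ8 h1 h2 h3 h4 h6 h7 h8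
end

section
/- For the reaction network with species $(A,B,C,D,E)$ and reactions $A+B\to B+C$, $B+C\to 2B$, $2B\to B+C$, $C\to A$, $E\to A$, $A+D\to D+E$, $D+E\to 2D$, $2D\to D+E$, under discrete reachability: for every $m\geq 2$, the set $\Upsilon_m = \{x\in\mathbb{Z}_{\geq0}^5 : x_2\geq 1,\ x_4\geq 1,\ \|x\|_1 = m\}$ is closed (no state outside $\Upsilon_m$ is reachable from $\Upsilon_m$) and irreducible (any two states of $\Upsilon_m$ are mutually reachable). -/
/-!
Every reaction preserves the number of molecules, and the only reactions consuming `B` or `D`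
(`2B → B + C`, `2D → D + E`) leave one copy behind, so `Υ_m` is closed. For irreducibility, set
one `B` and one `D` aside as catalysts: in their presence every single molecule can be turned
into an `A` and back (e.g. `B → A` as `2B → B + C → B + A`). Reachability is invariant under adding
molecules, so converting one molecule at a time, every state of `Υ_m` reaches
`(m - 2) A + B + D` and is reached from it.
-/

open Finset

/-- The network A+B → B+C, B+C → 2B, 2B → B+C, C → A, E → A, A+D → D+E, D+E → 2D, 2D → D+E. -/
def N5 : List (Rxn 5) :=
  [(![1,1,0,0,0], ![0,1,1,0,0]), (![0,1,1,0,0], ![0,2,0,0,0]), (![0,2,0,0,0], ![0,1,1,0,0]),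
   (![0,0,1,0,0], ![1,0,0,0,0]), (![0,0,0,0,1], ![1,0,0,0,0]),
   (![1,0,0,1,0], ![0,0,0,1,1]), (![0,0,0,1,1], ![0,0,0,2,0]), (![0,0,0,2,0], ![0,0,0,1,1])]

/-- The set `Υ_m` of states of mass `m` with at least one B and one D molecule. -/
def Υ (m : ℕ) : Set (State 5) := {x | 1 ≤ x 1 ∧ 1 ≤ x 3 ∧ ∑ i, x i = m}

section Reachability

variable {d : ℕ} {R : List (Rxn d)}

instance (R : List (Rxn d)) : DecidableRel (step R) := fun _ _ => by
  unfold step active; infer_instance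

theorem step.add_left {x y : State d} (z : State d) (h : step R x y) : step R (z + x) (z + y) := by
  obtain ⟨r, hr, hact, heq⟩ := h
  refine ⟨r, hr, fun i => (hact i).trans (Nat.le_add_left _ _), fun i => ?_⟩
  simp only [Pi.add_apply]
  linarith [heq i]

theorem reach.add_left {x y : State d} (z : State d) (h : reach R x y) : reach R (z + x) (z + y) :=
  h.lift (z + ·) fun _ _ => step.add_left z

theorem closedSet_of_step {Γ : Set (State d)} (hΓ : ∀ x ∈ Γ, ∀ y, step R x y → y ∈ Γ) :
    closedSet R Γ := by
  intro x hx y hxy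
  induction hxy with
  | refl => exact hx
  | tail _ hs ih => exact hΓ _ ih _ hs

theorem sum_eq_of_step (hR : ∀ r ∈ R, ∑ i, r.1 i = ∑ i, r.2 i) {x y : State d}
    (h : step R x y) : ∑ i, y i = ∑ i, x i := by
  obtain ⟨r, hr, -, heq⟩ := h
  have := Finset.sum_congr rfl fun i (_ : i ∈ univ) => heq i
  rw [sum_add_distrib, sum_add_distrib, hR r hr] at this
  omega

theorem one_le_of_step (i : Fin d) (hR : ∀ r ∈ R, r.1 i ≤ r.2 i ∨ 1 ≤ r.2 i) {x y : State d}
    (h : step R x y) (hx : 1 ≤ x i) : 1 ≤ y i := by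
  obtain ⟨r, hr, hact, heq⟩ := h
  have := hact i
  have := heq i
  rcases hR r hr with h | h <;> omega

theorem rel_sum_smul_single (rel : State d → State d → Prop) (hrefl : ∀ x, rel x x)
    (htrans : ∀ {x y z}, rel x y → rel y z → rel x z)
    (hadd : ∀ z x y, rel x y → rel (z + x) (z + y)) (h : Fin d)
    (hto : ∀ i, rel (Pi.single i 1) (Pi.single h 1)) (w : State d) :
    rel w ((∑ i, w i) • Pi.single h 1) := by
  induction hn : ∑ i, w i generalizing w with
  | zero =>
    have : w = 0 := funext fun i => (Finset.sum_eq_zero_iff.mp hn) i (mem_univ i)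
    simpa [this] using hrefl 0
  | succ n ih =>
    obtain ⟨i, -, hi⟩ := Finset.exists_ne_zero_of_sum_ne_zero (hn.trans_ne n.succ_ne_zero)
    set w₀ := w - Pi.single i 1
    have hw : w = w₀ + Pi.single i 1 := by
      refine (tsub_add_cancel_of_le fun j => ?_).symm
      rcases eq_or_ne j i with rfl | hj
      · simpa [Nat.one_le_iff_ne_zero] using hi
      · simp [hj]
    have hw₀ : ∑ j, w₀ j = n := by
      rw [hw] at hn
      simpa [sum_add_distrib] using hn
    rw [hw, succ_nsmul]
    refine htrans (hadd w₀ _ _ (hto i)) ?_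
    simpa only [add_comm] using hadd (Pi.single h 1) _ _ (ih w₀ hw₀)

theorem reach_of_hub (c : State d) (h : Fin d)
    (hto : ∀ i, reach R (c + Pi.single i 1) (c + Pi.single h 1))
    (hfrom : ∀ i, reach R (c + Pi.single h 1) (c + Pi.single i 1))
    {x y : State d} (hx : c ≤ x) (hy : c ≤ y) (hxy : ∑ i, x i = ∑ i, y i) : reach R x y := by
  have hadd : ∀ z u v, reach R (c + u) (c + v) → reach R (c + (z + u)) (c + (z + v)) :=
    fun z u v huv => by simpa only [add_left_comm] using huv.add_left z
  have hmass : ∑ i, (x - c) i = ∑ i, (y - c) i := by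
    simp only [Pi.sub_apply]
    rw [sum_tsub_distrib _ fun i _ => hx i, sum_tsub_distrib _ fun i _ => hy i, hxy]
  rw [← add_tsub_cancel_of_le hx, ← add_tsub_cancel_of_le hy]
  refine .trans (rel_sum_smul_single (fun u v => reach R (c + u) (c + v))
    (fun _ => .refl) .trans hadd h hto (x - c)) ?_
  rw [hmass]
  exact rel_sum_smul_single (fun u v => reach R (c + v) (c + u))
    (fun _ => .refl) (fun huv hvw => hvw.trans huv) (fun z u v => hadd z v u) h hfrom (y - c)

end Reachability

theorem N5_mass_conserving : ∀ r ∈ N5, ∑ i, r.1 i = ∑ i, r.2 i := by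
  decide

theorem N5_keeps_one_B : ∀ r ∈ N5, r.1 1 ≤ r.2 1 ∨ 1 ≤ r.2 1 := by
  decide

theorem N5_keeps_one_D : ∀ r ∈ N5, r.1 3 ≤ r.2 3 ∨ 1 ≤ r.2 3 := by
  decide

theorem closedSet_N5_Υ (m : ℕ) : closedSet N5 (Υ m) :=
  closedSet_of_step fun _ ⟨hB, hD, hm⟩ _ hxy =>
    ⟨one_le_of_step 1 N5_keeps_one_B hxy hB, one_le_of_step 3 N5_keeps_one_D hxy hD,
      (sum_eq_of_step N5_mass_conserving hxy).trans hm⟩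

theorem N5_reach_A (i : Fin 5) :
    reach N5 (![0,1,0,1,0] + Pi.single i 1) (![0,1,0,1,0] + Pi.single 0 1) := by
  fin_cases i
  · exact .refl
  · exact .head (b := ![0,1,1,1,0]) (by decide) (.single (by decide))
  · exact .single (by decide)
  · exact .head (b := ![0,1,0,1,1]) (by decide) (.single (by decide))
  · exact .single (by decide)

theorem N5_A_reach (i : Fin 5) :
    reach N5 (![0,1,0,1,0] + Pi.single 0 1) (![0,1,0,1,0] + Pi.single i 1) := by
  fin_cases i
  · exact .refl
  · exact .head (b := ![0,1,1,1,0]) (by decide) (.single (by decide))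
  · exact .single (by decide)
  · exact .head (b := ![0,1,0,1,1]) (by decide) (.single (by decide))
  · exact .single (by decide)

theorem reach_of_mem_Υ {m : ℕ} {x y : State 5} (hx : x ∈ Υ m) (hy : y ∈ Υ m) : reach N5 x y := by
  have hle : ∀ z ∈ Υ m, ![0,1,0,1,0] ≤ z := fun z ⟨hB, hD, _⟩ i => by
    fin_cases i <;> simp [hB, hD]
  exact reach_of_hub _ 0 N5_reach_A N5_A_reach (hle x hx) (hle y hy) (hx.2.2.trans hy.2.2.symm)

/-- For every `m ≥ 2`, the set `Υ_m` is closed and irreducible. -/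
theorem closed_irreducible_Υ : ∀ m : ℕ, 2 ≤ m →
    (∀ x ∈ Υ m, ∀ x', reach N5 x x' → x' ∈ Υ m) ∧
    (∀ x ∈ Υ m, ∀ x' ∈ Υ m, reach N5 x x') :=
  fun m _ => ⟨closedSet_N5_Υ m, fun _ hx _ hy => reach_of_mem_Υ hx hy⟩
end

section
/- For the deterministic mass action system with species $(A,B,C,D,E)$ and reactions $A+B\xrightarrow{\kappa_1} C+E$, $C+E\xrightarrow{\kappa_2} B+D$, $B+D\xrightarrow{\kappa_3} C+E$, $C\xrightarrow{\kappa_4} A$, $B\xrightarrow{\kappa_5} D$, $D\xrightarrow{\kappa_6} E$, $E\xrightarrow{\kappa_7} B$: every positive equilibrium $c\in\mathbb{R}_{>0}^5$ has first coordinate $c_1 = u$, where $u$ is the unique positive root of $\kappa_1^2\kappa_2\kappa_6 u^2 + \kappa_1\kappa_2\kappa_5\kappa_6 u - \kappa_3\kappa_4\kappa_5\kappa_7 = 0$, namely $u = \big(-\kappa_2\kappa_5\kappa_6 + \sqrt{\kappa_2^2\kappa_5^2\kappa_6^2 + 4\kappa_2\kappa_3\kappa_4\kappa_5\kappa_6\kappa_7}\big)/(2\kappa_1\kappa_2\kappa_6)$;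 hence species $A$ is ACR. -/
/-!
At a positive equilibrium the reversible pair `C + E ⇌ B + D` is balanced, so the steady-state
equations of `C`, `D` and `E` become `κ4 c_C = κ1 c_A c_B`, `κ6 c_D = κ5 c_B` and
`κ7 c_E = κ1 c_A c_B + κ5 c_B`. Substituting these into `κ2 c_C c_E = κ3 c_B c_D` and dividing by
`c_B²` leaves a quadratic in `c_A` alone with positive leading and linear coefficients and negative
constant term, which has exactly one positive root.
-/

theorem quadratic_root_pos {a b c : ℝ} (ha : 0 < a) (hb : 0 ≤ b) (hc : 0 < c) :
    0 < (-b + √(b ^ 2 + 4 * a * c)) / (2 * a) := by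
  have hb_lt : b < √(b ^ 2 + 4 * a * c) := (Real.lt_sqrt hb).2 (by nlinarith [mul_pos ha hc])
  exact div_pos (by linarith) (by positivity)

theorem quadratic_eq_zero_iff_of_pos {a b c x : ℝ} (ha : 0 < a) (hb : 0 ≤ b) (hc : 0 < c)
    (hx : 0 < x) :
    a * x ^ 2 + b * x - c = 0 ↔ x = (-b + √(b ^ 2 + 4 * a * c)) / (2 * a) := by
  set s := √(b ^ 2 + 4 * a * c)
  have hs : discrim a b (-c) = s * s := by
    rw [Real.mul_self_sqrt (by positivity), discrim]
    ring
  have hs_pos : 0 < s := Real.sqrt_pos.2 (by nlinarith [mul_pos ha hc])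
  have h_other_neg : (-b - s) / (2 * a) < 0 := div_neg_of_neg_of_pos (by linarith) (by positivity)
  rw [sq, sub_eq_add_neg, quadratic_eq_zero_iff ha.ne' hs]
  exact or_iff_left (by linarith)

theorem quadratic_eq_zero_of_equilibrium {κ1 κ2 κ3 κ4 κ5 κ6 κ7 : ℝ} {c : Fin 5 → ℝ}
    (hc1 : c 1 ≠ 0)
    (heq : -κ1 * c 0 * c 1 + κ4 * c 2 = 0 ∧
       -κ1 * c 0 * c 1 + κ2 * c 2 * c 4 - κ3 * c 1 * c 3 - κ5 * c 1 + κ7 * c 4 = 0 ∧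
       κ1 * c 0 * c 1 - κ2 * c 2 * c 4 + κ3 * c 1 * c 3 - κ4 * c 2 = 0 ∧
       κ2 * c 2 * c 4 - κ3 * c 1 * c 3 + κ5 * c 1 - κ6 * c 3 = 0 ∧
       κ1 * c 0 * c 1 - κ2 * c 2 * c 4 + κ3 * c 1 * c 3 + κ6 * c 3 - κ7 * c 4 = 0) :
    κ1 ^ 2 * κ2 * κ6 * c 0 ^ 2 + κ1 * κ2 * κ5 * κ6 * c 0 - κ3 * κ4 * κ5 * κ7 = 0 := by
  obtain ⟨eA, -, eC, eD, eE⟩ := heq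
  have balance : κ2 * c 2 * c 4 = κ3 * c 1 * c 3 := by linear_combination -eA - eC
  have hC : κ4 * c 2 = κ1 * c 0 * c 1 := by linear_combination eA
  have hD : κ6 * c 3 = κ5 * c 1 := by linear_combination balance - eD
  have hE : κ7 * c 4 = κ1 * c 0 * c 1 + κ5 * c 1 := by linear_combination -eE - balance + hD
  have h : (κ1 ^ 2 * κ2 * κ6 * c 0 ^ 2 + κ1 * κ2 * κ5 * κ6 * c 0 - κ3 * κ4 * κ5 * κ7)
      * c 1 ^ 2 = 0 := by
    linear_combination κ4 * κ6 * κ7 * balance - κ2 * κ6 * κ7 * c 4 * hC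
      - κ1 * κ2 * κ6 * c 0 * c 1 * hE + κ3 * κ4 * κ7 * c 1 * hD
  exact (mul_eq_zero.1 h).resolve_right (pow_ne_zero 2 hc1)

/-- For the system A+B →(κ1) C+E, C+E →(κ2) B+D, B+D →(κ3) C+E, C →(κ4) A, B →(κ5) D,
D →(κ6) E, E →(κ7) B: the number `u` given by the quadratic formula is the unique positive
root of `κ1²κ2κ6 u² + κ1κ2κ5κ6 u - κ3κ4κ5κ7 = 0`, and every positive equilibrium has first
coordinate `u`; hence species A is ACR. -/
theorem acr_example4 (κ1 κ2 κ3 κ4 κ5 κ6 κ7 : ℝ)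
    (h1 : 0 < κ1) (h2 : 0 < κ2) (h3 : 0 < κ3) (h4 : 0 < κ4)
    (h5 : 0 < κ5) (h6 : 0 < κ6) (h7 : 0 < κ7) :
    let u := (-(κ2 * κ5 * κ6) +
      Real.sqrt (κ2^2 * κ5^2 * κ6^2 + 4 * κ2 * κ3 * κ4 * κ5 * κ6 * κ7)) / (2 * κ1 * κ2 * κ6)
    (0 < u ∧ κ1^2 * κ2 * κ6 * u^2 + κ1 * κ2 * κ5 * κ6 * u - κ3 * κ4 * κ5 * κ7 = 0 ∧
      (∀ v : ℝ, 0 < v →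
        κ1^2 * κ2 * κ6 * v^2 + κ1 * κ2 * κ5 * κ6 * v - κ3 * κ4 * κ5 * κ7 = 0 → v = u)) ∧
    ∀ c : Fin 5 → ℝ, (∀ i, 0 < c i) →
      (-κ1 * c 0 * c 1 + κ4 * c 2 = 0 ∧
       -κ1 * c 0 * c 1 + κ2 * c 2 * c 4 - κ3 * c 1 * c 3 - κ5 * c 1 + κ7 * c 4 = 0 ∧
       κ1 * c 0 * c 1 - κ2 * c 2 * c 4 + κ3 * c 1 * c 3 - κ4 * c 2 = 0 ∧
       κ2 * c 2 * c 4 - κ3 * c 1 * c 3 + κ5 * c 1 - κ6 * c 3 = 0 ∧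
       κ1 * c 0 * c 1 - κ2 * c 2 * c 4 + κ3 * c 1 * c 3 + κ6 * c 3 - κ7 * c 4 = 0) →
      c 0 = u := by
  intro u
  -- Substituting `t = κ1 u` turns the quadratic into `(κ2 κ6) t² + (κ2 κ5 κ6) t - κ3 κ4 κ5 κ7`.
  have ha : 0 < κ2 * κ6 := by positivity
  have hb : 0 ≤ κ2 * κ5 * κ6 := by positivity
  have hc : 0 < κ3 * κ4 * κ5 * κ7 := by positivity
  have hu : κ1 * u =
      (-(κ2 * κ5 * κ6) + √((κ2 * κ5 * κ6) ^ 2 + 4 * (κ2 * κ6) * (κ3 * κ4 * κ5 * κ7)))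
        / (2 * (κ2 * κ6)) := by
    simp only [u]
    field_simp
  have hu_pos : 0 < u := pos_of_mul_pos_right (hu ▸ quadratic_root_pos ha hb hc) h1.le
  have root_iff : ∀ v, 0 < v →
      (κ1^2 * κ2 * κ6 * v^2 + κ1 * κ2 * κ5 * κ6 * v - κ3 * κ4 * κ5 * κ7 = 0 ↔ v = u) := by
    intro v hv
    rw [show κ1^2 * κ2 * κ6 * v^2 + κ1 * κ2 * κ5 * κ6 * v = (κ2 * κ6) * (κ1 * v) ^ 2 +
        (κ2 * κ5 * κ6) * (κ1 * v) by ring, quadratic_eq_zero_iff_of_pos ha hb hc (by positivity),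
      ← hu, mul_right_inj' h1.ne']
  refine ⟨⟨hu_pos, (root_iff u hu_pos).2 rfl, fun v hv => (root_iff v hv).1⟩, ?_⟩
  intro c hc_pos heq
  exact (root_iff _ (hc_pos 0)).1 (quadratic_eq_zero_of_equilibrium (hc_pos 1).ne' heq)
end
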